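/- arXiv:0906.3143 — 2 statements merged into one kernel-verified Lean document; each statement's English description precedes it below -/
import Mathlib

section
/- Let β ∈ ℝ, let f : ℝ → ℝ be smooth with f'' = β·f, and let u : ℂ → ℝ be a smooth solution of ∂²u/∂z∂z̄ = -f(u). Writing u_j = ∂^{j+1}u/∂z^{j+1}, the function P = u_4 - (5β/2)·u_2·u_0² - (5β/2)·u_1²·u_0 + (3β²/8)·u_0⁵ satisfies the linearized equation ∂²P/∂z∂z̄ + f'(u)·P = 0. -/
open Complex

/-- The Wirtinger derivative ∂/∂z of a function F : ℂ → ℂ. -/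
noncomputable def wdz (F : ℂ → ℂ) (z : ℂ) : ℂ :=
  (fderiv ℝ F z 1 - Complex.I * fderiv ℝ F z Complex.I) / 2

/-- The Wirtinger derivative ∂/∂z̄ of a function F : ℂ → ℂ. -/
noncomputable def wdzb (F : ℂ → ℂ) (z : ℂ) : ℂ :=
  (fderiv ℝ F z 1 + Complex.I * fderiv ℝ F z Complex.I) / 2

/-- u_j = ∂^{j+1} u / ∂z^{j+1}. -/
noncomputable def uj (u : ℂ → ℝ) (j : ℕ) : ℂ → ℂ :=
  wdz^[j + 1] (fun w => (u w : ℂ))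

theorem contDiff_wdz {F : ℂ → ℂ} (hF : ContDiff ℝ (⊤:ℕ∞) F) : ContDiff ℝ (⊤:ℕ∞) (wdz F) := by
  unfold wdz
  have h := hF.fderiv_right (m := (⊤:ℕ∞)) (by exact_mod_cast le_top)
  exact ((h.clm_apply contDiff_const).sub (contDiff_const.mul (h.clm_apply contDiff_const))).div_const 2

theorem contDiff_wdzb {F : ℂ → ℂ} (hF : ContDiff ℝ (⊤:ℕ∞) F) : ContDiff ℝ (⊤:ℕ∞) (wdzb F) := by
  unfold wdzb
  have h := hF.fderiv_right (m := (⊤:ℕ∞)) (by exact_mod_cast le_top)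
  exact ((h.clm_apply contDiff_const).add (contDiff_const.mul (h.clm_apply contDiff_const))).div_const 2

@[fun_prop] theorem contDiff_uj {u : ℂ → ℝ} (hu : ContDiff ℝ (⊤:ℕ∞) u) (j : ℕ) :
    ContDiff ℝ (⊤:ℕ∞) (uj u j) := by
  induction j with
  | zero => exact contDiff_wdz (Complex.ofRealCLM.contDiff.comp hu)
  | succ n ih =>
      have : uj u (n+1) = wdz (uj u n) := by
        simp [uj, Function.iterate_succ_apply']
      rw [this]; exact contDiff_wdz ih

@[fun_prop] theorem differentiable_uj {u : ℂ → ℝ} (hu : ContDiff ℝ (⊤:ℕ∞) u) (j : ℕ) :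
    Differentiable ℝ (uj u j) := (contDiff_uj hu j).differentiable (by simp)

theorem uj_succ {u : ℂ → ℝ} (j : ℕ) : uj u (j+1) = wdz (uj u j) := by
  simp [uj, Function.iterate_succ_apply']

theorem uj_zero {u : ℂ → ℝ} : uj u 0 = wdz (fun w => (u w : ℂ)) := by
  simp [uj]

theorem wdz_add {F G : ℂ → ℂ} {z : ℂ} (hF : DifferentiableAt ℝ F z) (hG : DifferentiableAt ℝ G z) :
    wdz (fun w => F w + G w) z = wdz F z + wdz G z := by
  unfold wdz
  rw [fderiv_fun_add hF hG]
  simp only [ContinuousLinearMap.add_apply]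
  ring

theorem wdz_neg {F : ℂ → ℂ} {z : ℂ} :
    wdz (fun w => -F w) z = -wdz F z := by
  unfold wdz
  rw [fderiv_fun_neg]
  simp only [ContinuousLinearMap.neg_apply]
  ring

theorem wdz_sub {F G : ℂ → ℂ} {z : ℂ} (hF : DifferentiableAt ℝ F z) (hG : DifferentiableAt ℝ G z) :
    wdz (fun w => F w - G w) z = wdz F z - wdz G z := by
  unfold wdz
  rw [fderiv_fun_sub hF hG]
  simp only [ContinuousLinearMap.sub_apply]
  ring

theorem wdz_mul {F G : ℂ → ℂ} {z : ℂ} (hF : DifferentiableAt ℝ F z) (hG : DifferentiableAt ℝ G z) :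
    wdz (fun w => F w * G w) z = wdz F z * G z + F z * wdz G z := by
  unfold wdz
  rw [fderiv_fun_mul hF hG]
  simp only [ContinuousLinearMap.add_apply, ContinuousLinearMap.smul_apply, smul_eq_mul]
  ring

theorem wdz_const {z : ℂ} (c : ℂ) : wdz (fun _ => c) z = 0 := by
  unfold wdz
  rw [fderiv_fun_const]
  simp

theorem wdzb_add {F G : ℂ → ℂ} {z : ℂ} (hF : DifferentiableAt ℝ F z) (hG : DifferentiableAt ℝ G z) :
    wdzb (fun w => F w + G w) z = wdzb F z + wdzb G z := by
  unfold wdzb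
  rw [fderiv_fun_add hF hG]
  simp only [ContinuousLinearMap.add_apply]
  ring

theorem wdzb_neg {F : ℂ → ℂ} {z : ℂ} :
    wdzb (fun w => -F w) z = -wdzb F z := by
  unfold wdzb
  rw [fderiv_fun_neg]
  simp only [ContinuousLinearMap.neg_apply]
  ring

theorem wdzb_sub {F G : ℂ → ℂ} {z : ℂ} (hF : DifferentiableAt ℝ F z) (hG : DifferentiableAt ℝ G z) :
    wdzb (fun w => F w - G w) z = wdzb F z - wdzb G z := by
  unfold wdzb
  rw [fderiv_fun_sub hF hG]
  simp only [ContinuousLinearMap.sub_apply]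
  ring

theorem wdzb_mul {F G : ℂ → ℂ} {z : ℂ} (hF : DifferentiableAt ℝ F z) (hG : DifferentiableAt ℝ G z) :
    wdzb (fun w => F w * G w) z = wdzb F z * G z + F z * wdzb G z := by
  unfold wdzb
  rw [fderiv_fun_mul hF hG]
  simp only [ContinuousLinearMap.add_apply, ContinuousLinearMap.smul_apply, smul_eq_mul]
  ring

theorem wdzb_const {z : ℂ} (c : ℂ) : wdzb (fun _ => c) z = 0 := by
  unfold wdzb
  rw [fderiv_fun_const]
  simp

@[fun_prop] theorem differentiable_ofReal' : Differentiable ℝ (fun x : ℝ => (x : ℂ)) :=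
  Complex.ofRealCLM.differentiable

theorem wdz_comp_real {g : ℝ → ℝ} {u : ℂ → ℝ} {z : ℂ}
    (hg : DifferentiableAt ℝ g (u z)) (hu : DifferentiableAt ℝ u z) :
    wdz (fun w => ((g (u w)) : ℂ)) z = (Complex.ofReal (deriv g (u z))) * wdz (fun w => ((u w) : ℂ)) z := by
  have h1 : HasFDerivAt (fun w => ((u w : ℝ) : ℂ)) (Complex.ofRealCLM.comp (fderiv ℝ u z)) z :=
    Complex.ofRealCLM.hasFDerivAt.comp z hu.hasFDerivAt
  have h2 : HasFDerivAt (fun w => g (u w)) (deriv g (u z) • fderiv ℝ u z) z :=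
    hg.hasDerivAt.comp_hasFDerivAt z hu.hasFDerivAt
  have h3 : HasFDerivAt (fun w => ((g (u w) : ℝ) : ℂ))
      (Complex.ofRealCLM.comp (deriv g (u z) • fderiv ℝ u z)) z :=
    Complex.ofRealCLM.hasFDerivAt.comp z h2
  unfold wdz
  rw [h3.fderiv, h1.fderiv]
  simp only [ContinuousLinearMap.coe_comp', Function.comp_apply,
    ContinuousLinearMap.smul_apply, Complex.ofRealCLM_apply, smul_eq_mul]
  push_cast
  ring

theorem wdzb_comp_real {g : ℝ → ℝ} {u : ℂ → ℝ} {z : ℂ}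
    (hg : DifferentiableAt ℝ g (u z)) (hu : DifferentiableAt ℝ u z) :
    wdzb (fun w => ((g (u w)) : ℂ)) z = (Complex.ofReal (deriv g (u z))) * wdzb (fun w => ((u w) : ℂ)) z := by
  have h1 : HasFDerivAt (fun w => ((u w : ℝ) : ℂ)) (Complex.ofRealCLM.comp (fderiv ℝ u z)) z :=
    Complex.ofRealCLM.hasFDerivAt.comp z hu.hasFDerivAt
  have h2 : HasFDerivAt (fun w => g (u w)) (deriv g (u z) • fderiv ℝ u z) z :=
    hg.hasDerivAt.comp_hasFDerivAt z hu.hasFDerivAt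
  have h3 : HasFDerivAt (fun w => ((g (u w) : ℝ) : ℂ))
      (Complex.ofRealCLM.comp (deriv g (u z) • fderiv ℝ u z)) z :=
    Complex.ofRealCLM.hasFDerivAt.comp z h2
  unfold wdzb
  rw [h3.fderiv, h1.fderiv]
  simp only [ContinuousLinearMap.coe_comp', Function.comp_apply,
    ContinuousLinearMap.smul_apply, Complex.ofRealCLM_apply, smul_eq_mul]
  push_cast
  ring

theorem wdz_wdzb_comm {F : ℂ → ℂ} (hF : ContDiff ℝ (⊤:ℕ∞) F) (z : ℂ) :
    wdzb (wdz F) z = wdz (wdzb F) z := by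
  have hd : Differentiable ℝ F := hF.differentiable (by simp)
  have hd2 : Differentiable ℝ (fderiv ℝ F) :=
    (hF.fderiv_right (m := (⊤:ℕ∞)) (by exact_mod_cast le_top)).differentiable
      (by simp)
  set S := fderiv ℝ (fderiv ℝ F) z with hS
  have hsym : ∀ v w, S v w = S w v :=
    second_derivative_symmetric (fun y => (hd y).hasFDerivAt) (hd2 z).hasFDerivAt
  have hA : ∀ a : ℂ, HasFDerivAt (fun w => fderiv ℝ F w a)
      ((ContinuousLinearMap.apply ℝ ℂ a).comp S) z :=
    fun a => (ContinuousLinearMap.apply ℝ ℂ a).hasFDerivAt.comp z (hd2 z).hasFDerivAt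
  have hv : ∀ v : ℂ, fderiv ℝ (wdz F) z v = (S v 1 - Complex.I * S v Complex.I) / 2 := by
    intro v
    have h1 : HasFDerivAt (wdz F)
        ((2:ℂ)⁻¹ • (((ContinuousLinearMap.apply ℝ ℂ (1:ℂ)).comp S) -
          Complex.I • ((ContinuousLinearMap.apply ℝ ℂ Complex.I).comp S))) z :=
      ((hA 1).sub ((hA Complex.I).const_mul Complex.I)).mul_const ((2:ℂ)⁻¹)
    rw [h1.fderiv]
    simp only [ContinuousLinearMap.smul_apply, ContinuousLinearMap.sub_apply,
      ContinuousLinearMap.coe_comp', Function.comp_apply, ContinuousLinearMap.apply_apply,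
      smul_eq_mul]
    ring
  have hvb : ∀ v : ℂ, fderiv ℝ (wdzb F) z v = (S v 1 + Complex.I * S v Complex.I) / 2 := by
    intro v
    have h1 : HasFDerivAt (wdzb F)
        ((2:ℂ)⁻¹ • (((ContinuousLinearMap.apply ℝ ℂ (1:ℂ)).comp S) +
          Complex.I • ((ContinuousLinearMap.apply ℝ ℂ Complex.I).comp S))) z :=
      ((hA 1).add ((hA Complex.I).const_mul Complex.I)).mul_const ((2:ℂ)⁻¹)
    rw [h1.fderiv]
    simp only [ContinuousLinearMap.smul_apply, ContinuousLinearMap.add_apply,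
      ContinuousLinearMap.coe_comp', Function.comp_apply, ContinuousLinearMap.apply_apply,
      smul_eq_mul]
    ring
  show (fderiv ℝ (wdz F) z 1 + Complex.I * fderiv ℝ (wdz F) z Complex.I) / 2 =
    (fderiv ℝ (wdzb F) z 1 - Complex.I * fderiv ℝ (wdzb F) z Complex.I) / 2
  rw [hv 1, hv Complex.I, hvb 1, hvb Complex.I, hsym Complex.I 1]
  ring

/-- If f'' = β·f and u is a smooth solution of u_{zz̄} = -f(u), then the
fifth-order Pinkall–Sterling Jacobi field
P = u₄ - (5β/2)u₂u₀² - (5β/2)u₁²u₀ + (3β²/8)u₀⁵ satisfies P_{zz̄} + f'(u)·P = 0. -/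
theorem stmt3 (β : ℝ) (f : ℝ → ℝ) (hf : ContDiff ℝ (⊤ : ℕ∞) f)
    (hode : ∀ t, deriv (deriv f) t = β * f t)
    (u : ℂ → ℝ) (hu : ContDiff ℝ (⊤ : ℕ∞) u)
    (hpde : ∀ z, wdzb (wdz (fun w => (u w : ℂ))) z = -(f (u z) : ℂ)) :
    ∀ z, wdzb (wdz (fun w =>
        uj u 4 w - (Complex.ofReal (5 * β / 2)) * uj u 2 w * (uj u 0 w) ^ 2
          - (Complex.ofReal (5 * β / 2)) * (uj u 1 w) ^ 2 * uj u 0 w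
          + (Complex.ofReal (3 * β ^ 2 / 8)) * (uj u 0 w) ^ 5)) z
      + (Complex.ofReal (deriv f (u z)))
          * (uj u 4 z - (Complex.ofReal (5 * β / 2)) * uj u 2 z * (uj u 0 z) ^ 2
              - (Complex.ofReal (5 * β / 2)) * (uj u 1 z) ^ 2 * uj u 0 z
              + (Complex.ofReal (3 * β ^ 2 / 8)) * (uj u 0 z) ^ 5) = 0 := by
  intro z
  have hu' : ContDiff ℝ (⊤:ℕ∞) u := hu.of_le (by simp)
  have hf' : ContDiff ℝ (⊤:ℕ∞) f := hf.of_le (by simp)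
  have hf1 : ContDiff ℝ (⊤:ℕ∞) (deriv f) := (contDiff_infty_iff_deriv.mp hf').2
  have hfd : Differentiable ℝ f := hf'.differentiable (by simp)
  have hf1d : Differentiable ℝ (deriv f) := hf1.differentiable (by simp)
  have hud : Differentiable ℝ u := hu'.differentiable (by simp)
  have dA : ∀ j, Differentiable ℝ (uj u j) := fun j => differentiable_uj hu' j
  have cA : ∀ j, ContDiff ℝ (⊤:ℕ∞) (uj u j) := fun j => contDiff_uj hu' j
  -- shifting lemmas
  have e1 : uj u 1 = wdz (uj u 0) := uj_succ 0
  have e2 : uj u 2 = wdz (uj u 1) := uj_succ 1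
  have e3 : uj u 3 = wdz (uj u 2) := uj_succ 2
  have e4 : uj u 4 = wdz (uj u 3) := uj_succ 3
  have wdzU0 : ∀ w, wdz (uj u 0) w = uj u 1 w := fun w => congrFun e1.symm w
  have wdzU1 : ∀ w, wdz (uj u 1) w = uj u 2 w := fun w => congrFun e2.symm w
  have wdzU2 : ∀ w, wdz (uj u 2) w = uj u 3 w := fun w => congrFun e3.symm w
  have wdzU3 : ∀ w, wdz (uj u 3) w = uj u 4 w := fun w => congrFun e4.symm w
  -- chain rules
  have wdzF0 : ∀ w, wdz (fun x => ((f (u x) : ℝ) : ℂ)) w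
      = Complex.ofReal (deriv f (u w)) * uj u 0 w := by
    intro w
    rw [wdz_comp_real (hfd _) (hud _), ← uj_zero]
  have wdzF1 : ∀ w, wdz (fun x => ((deriv f (u x) : ℝ) : ℂ)) w
      = (β : ℂ) * Complex.ofReal (f (u w)) * uj u 0 w := by
    intro w
    rw [wdz_comp_real (hf1d _) (hud _), ← uj_zero,
      hode (u w)]
    push_cast
    ring
  -- the ∂z̄ ladder
  have h0 : ∀ w, wdzb (uj u 0) w = -Complex.ofReal (f (u w)) := by
    intro w
    rw [uj_zero]
    exact hpde w
  have h1 : ∀ w, wdzb (uj u 1) w = -(Complex.ofReal (deriv f (u w)) * uj u 0 w) := by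
    intro w
    rw [e1, wdz_wdzb_comm (cA 0) w, funext h0]
    simp (disch := fun_prop) only [wdz_neg, wdzF0]
  have h2 : ∀ w, wdzb (uj u 2) w =
      -((β : ℂ) * Complex.ofReal (f (u w)) * uj u 0 w * uj u 0 w
        + Complex.ofReal (deriv f (u w)) * uj u 1 w) := by
    intro w
    rw [e2, wdz_wdzb_comm (cA 1) w, funext h1]
    simp (disch := fun_prop) only [wdz_neg, wdz_mul, wdzF0, wdzF1, wdzU0]
    try ring
  have h3 : ∀ w, wdzb (uj u 3) w =
      -((β : ℂ) * Complex.ofReal (deriv f (u w)) * uj u 0 w * uj u 0 w * uj u 0 w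
        + 3 * (β : ℂ) * Complex.ofReal (f (u w)) * uj u 0 w * uj u 1 w
        + Complex.ofReal (deriv f (u w)) * uj u 2 w) := by
    intro w
    rw [e3, wdz_wdzb_comm (cA 2) w, funext h2]
    simp (disch := fun_prop) only [wdz_neg, wdz_add, wdz_mul, wdz_const, wdzF0, wdzF1,
      wdzU0, wdzU1]
    ring
  have h4 : ∀ w, wdzb (uj u 4) w =
      -((β : ℂ) * (β : ℂ) * Complex.ofReal (f (u w)) * uj u 0 w * uj u 0 w * uj u 0 w * uj u 0 w
        + 6 * (β : ℂ) * Complex.ofReal (deriv f (u w)) * uj u 0 w * uj u 0 w * uj u 1 w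
        + 3 * (β : ℂ) * Complex.ofReal (f (u w)) * uj u 1 w * uj u 1 w
        + 4 * (β : ℂ) * Complex.ofReal (f (u w)) * uj u 0 w * uj u 2 w
        + Complex.ofReal (deriv f (u w)) * uj u 3 w) := by
    intro w
    rw [e4, wdz_wdzb_comm (cA 3) w, funext h3]
    simp (disch := fun_prop) only [wdz_neg, wdz_add, wdz_mul, wdz_const, wdzF0, wdzF1,
      wdzU0, wdzU1, wdzU2]
    ring
  -- replace the Jacobi field by a power-free version
  have hP : (fun w => uj u 4 w - (Complex.ofReal (5 * β / 2)) * uj u 2 w * (uj u 0 w) ^ 2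
          - (Complex.ofReal (5 * β / 2)) * (uj u 1 w) ^ 2 * uj u 0 w
          + (Complex.ofReal (3 * β ^ 2 / 8)) * (uj u 0 w) ^ 5)
      = (fun w => uj u 4 w
          - Complex.ofReal (5 * β / 2) * uj u 2 w * (uj u 0 w * uj u 0 w)
          - Complex.ofReal (5 * β / 2) * (uj u 1 w * uj u 1 w) * uj u 0 w
          + Complex.ofReal (3 * β ^ 2 / 8)
            * (uj u 0 w * uj u 0 w * uj u 0 w * uj u 0 w * uj u 0 w)) := by
    funext w
    ring
  rw [hP]
  have cP : ContDiff ℝ (⊤:ℕ∞) (fun w => uj u 4 w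
          - Complex.ofReal (5 * β / 2) * uj u 2 w * (uj u 0 w * uj u 0 w)
          - Complex.ofReal (5 * β / 2) * (uj u 1 w * uj u 1 w) * uj u 0 w
          + Complex.ofReal (3 * β ^ 2 / 8)
            * (uj u 0 w * uj u 0 w * uj u 0 w * uj u 0 w * uj u 0 w)) := by
    exact (((cA 4).sub ((contDiff_const.mul (cA 2)).mul ((cA 0).mul (cA 0)))).sub
      ((contDiff_const.mul ((cA 1).mul (cA 1))).mul (cA 0))).add
      (contDiff_const.mul ((((((cA 0).mul (cA 0))).mul (cA 0)).mul (cA 0)).mul (cA 0)))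
  rw [wdz_wdzb_comm cP z]
  have hDbP : wdzb (fun w => uj u 4 w
          - Complex.ofReal (5 * β / 2) * uj u 2 w * (uj u 0 w * uj u 0 w)
          - Complex.ofReal (5 * β / 2) * (uj u 1 w * uj u 1 w) * uj u 0 w
          + Complex.ofReal (3 * β ^ 2 / 8)
            * (uj u 0 w * uj u 0 w * uj u 0 w * uj u 0 w * uj u 0 w))
      = fun w =>
        -(Complex.ofReal (deriv f (u w)) * uj u 3 w)
        + 3 * (β : ℂ) / 2 * Complex.ofReal (deriv f (u w)) * uj u 0 w * uj u 0 w * uj u 1 w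
        + (β : ℂ) * Complex.ofReal (f (u w)) * uj u 0 w * uj u 2 w
        - (β : ℂ) / 2 * Complex.ofReal (f (u w)) * uj u 1 w * uj u 1 w
        - 3 * (β : ℂ) * (β : ℂ) / 8 * Complex.ofReal (f (u w))
            * uj u 0 w * uj u 0 w * uj u 0 w * uj u 0 w := by
    funext w
    simp (disch := fun_prop) only [wdzb_sub, wdzb_add, wdzb_mul, wdzb_const, h0, h1, h2, h3, h4]
    push_cast
    ring
  rw [hDbP]
  simp (disch := fun_prop) only [wdz_sub, wdz_add, wdz_neg, wdz_mul, wdz_const, wdzF0, wdzF1,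
    wdzU0, wdzU1, wdzU2, wdzU3]
  push_cast
  ring
end

section
/- Let f : ℝ → ℝ be smooth such that f and f' are linearly independent over ℝ. Consider the derivation E on R = C^∞(ℝ)[u_0, u_1, ...] given by E = f·∂/∂u_0 + Σ_{j≥1} T^j·∂/∂u_j, where T^j = (e_{-1})^j f. Then the kernel of E restricted to polynomials in u_0, ..., u_k (with coefficients constants, i.e. elements of ℝ[u_0,...,u_k]) consists only of the constants. -/
open MvPolynomial

/-- The coefficient ring C^∞-functions of u (modelled as all functions ℝ → ℝ,
with the relevant functions required smooth in the hypotheses). -/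
abbrev SF : Type := ℝ → ℝ

/-- The ring R = C^∞(ℝ)[u₀, u₁, u₂, ...]: polynomials in the formal variables
u_j (j : ℕ) with function coefficients. -/
abbrev RR : Type := MvPolynomial ℕ SF

/-- The operator ∂/∂u, differentiating the coefficient functions. -/
noncomputable def du (p : RR) : RR :=
  ∑ m ∈ p.support, monomial m (deriv (MvPolynomial.coeff m p))

/-- The total derivative e₋₁ = u₀·∂/∂u + Σ_i u_{i+1}·∂/∂u_i
(a finite sum on any polynomial). -/
noncomputable def eneg1 (p : RR) : RR :=
  X 0 * du p + ∑ i ∈ p.vars, X (i + 1) * pderiv i p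

/-- T^j = (e₋₁)^j f. -/
noncomputable def Tf (f : SF) (j : ℕ) : RR := eneg1^[j] (MvPolynomial.C f)

/-- The recursively defined T^i: T⁰ = f, T^{i+1} = Σ_{j=0}^{i} C(i,j)·u_{i-j}·(T^j)_u. -/
noncomputable def Trec (f : SF) : ℕ → RR
  | 0 => MvPolynomial.C f
  | (i + 1) => ∑ j ∈ (Finset.range (i + 1)).attach,
      (Nat.choose i j.1 : RR) * (X (i - j.1) * du (Trec f j.1))
  decreasing_by exact Finset.mem_range.mp j.2

/-- The operator Σ_{j≥0} T^j·∂/∂u_j = f·∂/∂u₀ + Σ_{j≥1} T^j·∂/∂u_j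
(equal to -e_{-̄1} on polynomials in the u_j). -/
noncomputable def Ebar (f : SF) (p : RR) : RR :=
  ∑ j ∈ p.vars, Tf f j * pderiv j p

/-- Inclusion of ℝ[u₀, u₁, ...] (constant coefficients) into R. -/
noncomputable def constLift : MvPolynomial ℕ ℝ →+* RR :=
  MvPolynomial.map (algebraMap ℝ SF)

/-- Weighted degree of a monomial, determined by wd(u_j) = j + 1. -/
def wdeg (m : ℕ →₀ ℕ) : ℕ := m.sum fun j e => e * (j + 1)

/-- The constant polynomial with constant value r. -/
noncomputable def Cc (r : ℝ) : RR := MvPolynomial.C (fun _ : ℝ => r)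

lemma deriv_zero_fun : deriv (0 : SF) = 0 := by
  funext x
  show deriv (fun _ : ℝ => (0:ℝ)) x = 0
  simp

lemma coeff_zero_du (p : RR) : coeff 0 (du p) = deriv (coeff 0 p) := by
  rw [du, coeff_sum]
  by_cases h : (0 : ℕ →₀ ℕ) ∈ p.support
  · rw [Finset.sum_eq_single (0 : ℕ →₀ ℕ)]
    · simp
    · intro b _ hb; rw [coeff_monomial, if_neg hb]
    · intro h'; exact absurd h h'
  · have h0 : coeff 0 p = 0 := by rwa [MvPolynomial.notMem_support_iff] at h
    rw [h0, deriv_zero_fun]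
    apply Finset.sum_eq_zero
    intro m hm
    rw [coeff_monomial, if_neg]
    rintro rfl; exact h hm

lemma coeff_pderiv' {R : Type*} [CommRing R] (i : ℕ) (m : ℕ →₀ ℕ) (p : MvPolynomial ℕ R) :
    coeff m (pderiv i p) = (m i + 1) * coeff (m + Finsupp.single i 1) p := by
  induction p using MvPolynomial.induction_on' with
  | monomial s a =>
    rw [pderiv_monomial, coeff_monomial, coeff_monomial]
    by_cases h : s = m + Finsupp.single i 1
    · subst h
      have h2 : m + Finsupp.single i 1 - Finsupp.single i 1 = m := by
        ext j; simp [Finsupp.single_apply]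
      rw [if_pos h2]
      simp [Finsupp.single_apply, mul_comm]
    · rw [if_neg h, mul_zero]
      by_cases h2 : s - Finsupp.single i 1 = m
      · rw [if_pos h2]
        by_cases h3 : s i = 0
        · simp [h3]
        · exfalso
          apply h
          rw [← h2, tsub_add_cancel_of_le]
          rwa [Finsupp.single_le_iff, Nat.one_le_iff_ne_zero]
      · rw [if_neg h2]
  | add p q hp hq => simp [hp, hq, mul_add]

lemma coeff_zero_pderiv (i : ℕ) (p : RR) :
    coeff 0 (pderiv i p) = coeff (Finsupp.single i 1) p := by
  rw [coeff_pderiv']; simp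

lemma constantCoeff_eneg1 (p : RR) : coeff 0 (eneg1 p) = 0 := by
  rw [eneg1, coeff_add, coeff_sum]
  rw [coeff_X_mul' (0 : ℕ →₀ ℕ) 0 (du p)]
  simp only [Finsupp.support_zero, Finset.notMem_empty, if_false, zero_add]
  apply Finset.sum_eq_zero
  intro i _
  rw [coeff_X_mul']
  simp

lemma coeff_single_eneg1_zero (p : RR) :
    coeff (Finsupp.single 0 1) (eneg1 p) = deriv (coeff 0 p) := by
  rw [eneg1, coeff_add, coeff_sum, coeff_X_mul']
  rw [if_pos (by simp : (0:ℕ) ∈ (Finsupp.single 0 1).support)]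
  simp only [tsub_self, coeff_zero_du]
  rw [Finset.sum_eq_zero, add_zero]
  intro i _
  rw [coeff_X_mul', if_neg]
  simp [Finsupp.support_single_ne_zero]

lemma coeff_single_eneg1_succ (p : RR) (m : ℕ) :
    coeff (Finsupp.single (m+1) 1) (eneg1 p) = coeff (Finsupp.single m 1) p := by
  rw [eneg1, coeff_add, coeff_sum, coeff_X_mul', if_neg (by simp [Finsupp.support_single_ne_zero])]
  rw [zero_add]
  by_cases hm : m ∈ p.vars
  · rw [Finset.sum_eq_single m]
    · rw [coeff_X_mul', if_pos (by simp [Finsupp.support_single_ne_zero])]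
      rw [tsub_self, coeff_zero_pderiv]
    · intro b _ hb
      rw [coeff_X_mul', if_neg]
      simp only [Finsupp.support_single_ne_zero _ (one_ne_zero), Finset.mem_singleton]
      omega
    · intro h; exact absurd hm h
  · rw [Finset.sum_eq_zero, eq_comm]
    · have : pderiv m p = 0 := pderiv_eq_zero_of_notMem_vars hm
      rw [← coeff_zero_pderiv, this, coeff_zero]
    · intro i hi
      rw [coeff_X_mul', if_neg]
      simp only [Finsupp.support_single_ne_zero _ (one_ne_zero), Finset.mem_singleton]
      intro h
      apply hm
      have : i = m := by omega
      rwa [← this]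

lemma Tf_zero (f : SF) : Tf f 0 = MvPolynomial.C f := rfl

lemma Tf_succ (f : SF) (j : ℕ) : Tf f (j+1) = eneg1 (Tf f j) :=
  Function.iterate_succ_apply' _ _ _

lemma constantCoeff_Tf (f : SF) (j : ℕ) (hj : 1 ≤ j) : coeff 0 (Tf f j) = 0 := by
  obtain ⟨i, rfl⟩ := Nat.exists_eq_add_of_le hj
  rw [Nat.add_comm, Tf_succ, constantCoeff_eneg1]

lemma coeff_single_Tf (f : SF) (j m : ℕ) :
    coeff (Finsupp.single m 1) (Tf f (j+1)) = if m = j then deriv f else 0 := by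
  induction j generalizing m with
  | zero =>
    rw [Tf_succ, Tf_zero]
    cases m with
    | zero => rw [coeff_single_eneg1_zero, if_pos rfl]; simp
    | succ m => rw [coeff_single_eneg1_succ, if_neg (by omega), coeff_C, if_neg (by simp [eq_comm, Finsupp.single_eq_zero])]
  | succ j ih =>
    rw [Tf_succ]
    cases m with
    | zero =>
      rw [coeff_single_eneg1_zero, constantCoeff_Tf f (j+1) (by omega), if_neg (by omega)]
      exact deriv_zero_fun
    | succ m =>
      rw [coeff_single_eneg1_succ, ih]
      by_cases h : m = j
      · rw [if_pos h, if_pos (by omega)]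
      · rw [if_neg h, if_neg (by omega)]

lemma vars_du (p : RR) : (du p).vars ⊆ p.vars := by
  classical
  refine (vars_sum_subset _ _).trans ?_
  intro i hi
  simp only [Finset.mem_biUnion] at hi
  obtain ⟨m, hm, hi⟩ := hi
  have h1 : (monomial m (deriv (coeff m p))).vars ⊆ m.support := by
    by_cases h : deriv (coeff m p) = 0
    · simp [h]
    · rw [vars_monomial h]
  rw [mem_vars]
  exact ⟨m, hm, h1 hi⟩

lemma vars_pderiv {R : Type*} [CommRing R] (i : ℕ) (p : MvPolynomial ℕ R) :
    (pderiv i p).vars ⊆ p.vars := by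
  intro j hj
  rw [mem_vars] at hj ⊢
  obtain ⟨d, hd, hjd⟩ := hj
  refine ⟨d + Finsupp.single i 1, ?_, ?_⟩
  · rw [mem_support_iff] at hd ⊢
    intro h
    apply hd
    rw [coeff_pderiv', h, mul_zero]
  · rw [Finsupp.mem_support_iff] at hjd ⊢
    simp only [Finsupp.add_apply]
    omega

lemma vars_eneg1 {p : RR} {n : ℕ} (h : p.vars ⊆ Finset.range n) :
    (eneg1 p).vars ⊆ Finset.range (n+1) := by
  classical
  rw [eneg1]
  refine (vars_add_subset _ _).trans (Finset.union_subset ?_ ?_)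
  · refine (vars_mul _ _).trans (Finset.union_subset ?_ ?_)
    · rw [vars_X]
      intro x hx
      simp only [Finset.mem_singleton] at hx
      simp [hx]
    · exact (vars_du p).trans (h.trans (by intro x; simp; omega))
  · refine (vars_sum_subset _ _).trans ?_
    intro x hx
    simp only [Finset.mem_biUnion] at hx
    obtain ⟨i, hi, hx⟩ := hx
    have hi' : i ∈ Finset.range n := h hi
    simp only [Finset.mem_range] at hi'
    have := (vars_mul _ _) hx
    rcases Finset.mem_union.mp this with h1 | h1
    · rw [vars_X] at h1
      simp only [Finset.mem_singleton] at h1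
      simp only [Finset.mem_range]; omega
    · have := h ((vars_pderiv i p) h1)
      simp only [Finset.mem_range] at this ⊢
      omega

lemma vars_Tf (f : SF) (j : ℕ) : (Tf f j).vars ⊆ Finset.range j := by
  induction j with
  | zero => rw [Tf_zero]; simp [vars_C]
  | succ j ih => rw [Tf_succ]; exact vars_eneg1 ih

lemma pderiv_comm' (i j : ℕ) (p : RR) :
    pderiv i (pderiv j p) = pderiv j (pderiv i p) := by
  apply MvPolynomial.ext
  intro m
  rw [coeff_pderiv', coeff_pderiv', coeff_pderiv', coeff_pderiv']
  rcases eq_or_ne i j with rfl | h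
  · rfl
  · rw [add_right_comm m (Finsupp.single i 1) (Finsupp.single j 1)]
    rw [Finsupp.add_apply, Finsupp.add_apply, Finsupp.single_apply, Finsupp.single_apply,
      if_neg h, if_neg (Ne.symm h)]
    ring_nf

lemma Ebar_eq_sum (f : SF) (P : RR) (S : Finset ℕ) (hS : P.vars ⊆ S) :
    Ebar f P = ∑ j ∈ S, Tf f j * pderiv j P := by
  rw [Ebar]
  refine Finset.sum_subset hS ?_
  intro j _ hj
  rw [pderiv_eq_zero_of_notMem_vars hj, mul_zero]

lemma Ebar_pderiv_top (f : SF) (n : ℕ) (q : MvPolynomial ℕ ℝ)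
    (hv : q.vars ⊆ Finset.range (n+1)) (hk : Ebar f (constLift q) = 0) :
    Ebar f (constLift (pderiv n q)) = 0 := by
  have hvP : (constLift q).vars ⊆ Finset.range (n+1) :=
    (MvPolynomial.vars_map _ _).trans hv
  have h2 : constLift (pderiv n q) = pderiv n (constLift q) := by
    rw [constLift]; exact MvPolynomial.pderiv_map.symm
  have hvP2 : (pderiv n (constLift q)).vars ⊆ Finset.range (n+1) :=
    (vars_pderiv _ _).trans hvP
  rw [h2, Ebar_eq_sum f _ _ hvP2]
  have h3 : pderiv n (Ebar f (constLift q)) = 0 := by rw [hk]; simp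
  rw [Ebar_eq_sum f _ _ hvP, map_sum] at h3
  rw [← h3]
  apply Finset.sum_congr rfl
  intro j hj
  rw [pderiv_mul]
  have hTj : pderiv n (Tf f j) = 0 := by
    apply pderiv_eq_zero_of_notMem_vars
    intro hmem
    have := vars_Tf f j hmem
    simp only [Finset.mem_range] at this hj
    omega
  rw [hTj, zero_mul, zero_add, pderiv_comm']

lemma coeff_single_mul (m : ℕ) (A B : RR) :
    coeff (Finsupp.single m 1) (A * B)
      = coeff 0 A * coeff (Finsupp.single m 1) B
        + coeff (Finsupp.single m 1) A * coeff 0 B := by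
  classical
  rw [coeff_mul, Finsupp.antidiagonal_single,
    show Finset.HasAntidiagonal.antidiagonal (1:ℕ) = {(0,1),(1,0)} by decide]
  simp [Finsupp.single_zero, add_comm]

lemma coeff_single_Tf' (f : SF) (j m : ℕ) (hj : 1 ≤ j) :
    coeff (Finsupp.single m 1) (Tf f j) = if m + 1 = j then deriv f else 0 := by
  obtain ⟨i, rfl⟩ := Nat.exists_eq_add_of_le hj
  rw [Nat.add_comm, coeff_single_Tf]
  by_cases h : m = i
  · rw [if_pos h, if_pos (by omega)]
  · rw [if_neg h, if_neg (by omega)]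

lemma not_mem_vars_of_pderiv_eq_zero (n : ℕ) (q : MvPolynomial ℕ ℝ)
    (h : pderiv n q = 0) : n ∉ q.vars := by
  intro hn
  rw [mem_vars] at hn
  obtain ⟨m, hm, hnm⟩ := hn
  have h1 : coeff (m - Finsupp.single n 1) (pderiv n q) = 0 := by rw [h, coeff_zero]
  rw [coeff_pderiv'] at h1
  have hmn : 1 ≤ m n := by
    rw [Finsupp.mem_support_iff] at hnm; omega
  have h2 : m - Finsupp.single n 1 + Finsupp.single n 1 = m :=
    tsub_add_cancel_of_le (by rwa [Finsupp.single_le_iff])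
  rw [h2] at h1
  rw [mem_support_iff] at hm
  apply hm
  rcases mul_eq_zero.mp h1 with h4 | h4
  · exfalso
    have : (((m - Finsupp.single n 1 : ℕ →₀ ℕ) n + 1 : ℕ) : ℝ) = 0 := by exact_mod_cast h4
    norm_cast at this
  · exact h4

lemma totalDegree_pderiv_lt (q : MvPolynomial ℕ ℝ) (n : ℕ) (h : pderiv n q ≠ 0) :
    (pderiv n q).totalDegree < q.totalDegree := by
  have key : ∀ m ∈ (pderiv n q).support, (m.sum fun _ e => e) < q.totalDegree := by
    intro m hm
    rw [mem_support_iff, coeff_pderiv'] at hm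
    have h1 : coeff (m + Finsupp.single n 1) q ≠ 0 := by
      intro h0; rw [h0, mul_zero] at hm; exact hm rfl
    have h2 := MvPolynomial.le_totalDegree (mem_support_iff.mpr h1)
    have h3 : ((m + Finsupp.single n 1).sum fun _ e => e)
        = (m.sum fun _ e => e) + 1 := by
      rw [Finsupp.sum_add_index' (fun _ => rfl) (fun _ _ _ => rfl)]
      simp
    omega
  have hpos : (⊥ : ℕ) < q.totalDegree := by
    obtain ⟨m, hm⟩ := (MvPolynomial.ne_zero_iff.mp h)
    have := key m (mem_support_iff.mpr hm)
    exact lt_of_le_of_lt bot_le this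
  rw [totalDegree]
  exact (Finset.sup_lt_iff hpos).mpr key

lemma li_pair (f : SF) (hli : LinearIndependent ℝ ![f, deriv f]) (r c : ℝ)
    (heq : r • f + c • deriv f = 0) : r = 0 ∧ c = 0 := by
  have h := Fintype.linearIndependent_iff.mp hli ![r, c] (by
    rw [Fin.sum_univ_two]
    simpa using heq)
  exact ⟨h 0, h 1⟩

lemma f_ne_zero (f : SF) (hli : LinearIndependent ℝ ![f, deriv f]) : f ≠ 0 := by
  intro h
  have := (li_pair f hli 1 0 (by rw [h]; simp)).1
  norm_num at this

lemma eq_C_of_vars_subset_empty (q : MvPolynomial ℕ ℝ) (h : q.vars ⊆ Finset.range 0) :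
    q = MvPolynomial.C (coeff 0 q) := by
  apply MvPolynomial.ext
  intro m
  rcases eq_or_ne m 0 with rfl | hm
  · simp [coeff_C]
  · rw [coeff_C, if_neg (Ne.symm hm)]
    by_contra hc
    obtain ⟨i, hi⟩ : ∃ i, m i ≠ 0 := by
      by_contra hall
      push_neg at hall
      exact hm (Finsupp.ext hall)
    have : i ∈ q.vars := (mem_vars i).mpr
      ⟨m, mem_support_iff.mpr hc, Finsupp.mem_support_iff.mpr hi⟩
    simpa using h this

lemma pderiv_constLift (j : ℕ) (q : MvPolynomial ℕ ℝ) :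
    pderiv j (constLift q) = constLift (pderiv j q) := by
  rw [constLift]; exact MvPolynomial.pderiv_map

lemma endgame (f : SF) (hli : LinearIndependent ℝ ![f, deriv f]) (n : ℕ)
    (q : MvPolynomial ℕ ℝ) (hv : q.vars ⊆ Finset.range (n+1))
    (hker : Ebar f (constLift q) = 0) (c : ℝ) (hc : c ≠ 0)
    (hd : pderiv n q = MvPolynomial.C c) : False := by
  have hvP : (constLift q).vars ⊆ Finset.range (n+1) :=
    (MvPolynomial.vars_map _ _).trans hv
  have h0 : ∑ j ∈ Finset.range (n+1), Tf f j * pderiv j (constLift q) = 0 := by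
    rw [← Ebar_eq_sum f _ _ hvP]; exact hker
  cases n with
  | zero =>
    rw [Finset.sum_range_one, pderiv_constLift, hd, Tf_zero] at h0
    have h1 : constLift (MvPolynomial.C c) = MvPolynomial.C (algebraMap ℝ SF c) := by
      rw [constLift, map_C]
    rw [h1, ← C_mul] at h0
    have h2 : f * algebraMap ℝ SF c = 0 := by
      have := MvPolynomial.C_injective ℕ SF
      exact this (by rw [h0, C_0])
    apply f_ne_zero f hli
    funext x
    have h3 := congrFun h2 x
    simp only [Pi.mul_apply, Pi.zero_apply] at h3
    have h4 : (algebraMap ℝ SF c) x = c := rfl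
    rw [h4] at h3
    have := mul_eq_zero.mp h3
    rcases this with h5 | h5
    · exact h5
    · exact absurd h5 hc
  | succ m =>
    set μ : ℕ →₀ ℕ := Finsupp.single m 1 with hμ
    have hcoeff := congrArg (coeff μ) h0
    rw [coeff_sum, coeff_zero] at hcoeff
    have hsub : ({0, m+1} : Finset ℕ) ⊆ Finset.range (m+2) := by
      intro x hx
      simp only [Finset.mem_insert, Finset.mem_singleton] at hx
      rcases hx with rfl | rfl <;> simp
    rw [← Finset.sum_subset hsub ?_] at hcoeff
    swap
    · intro j hj hj'
      simp only [Finset.mem_range] at hj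
      simp only [Finset.mem_insert, Finset.mem_singleton] at hj'
      push_neg at hj'
      obtain ⟨hj0, hjn⟩ := hj'
      rw [coeff_single_mul, constantCoeff_Tf f j (by omega), zero_mul, zero_add,
        coeff_single_Tf' f j m (by omega), if_neg (by omega), zero_mul]
    rw [Finset.sum_pair (by omega : (0:ℕ) ≠ m+1)] at hcoeff
    -- term j = 0
    have ht0 : coeff μ (Tf f 0 * pderiv 0 (constLift q))
        = algebraMap ℝ SF (coeff μ (pderiv 0 q)) * f := by
      rw [Tf_zero, coeff_C_mul, pderiv_constLift, constLift, coeff_map, mul_comm]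
    -- term j = n
    have htn : coeff μ (Tf f (m+1) * pderiv (m+1) (constLift q))
        = algebraMap ℝ SF c * deriv f := by
      rw [coeff_single_mul, constantCoeff_Tf f (m+1) (by omega), zero_mul, zero_add,
        coeff_single_Tf' f (m+1) m (by omega), if_pos rfl, pderiv_constLift, hd]
      rw [constLift, map_C]
      simp [coeff_C, mul_comm]
    rw [ht0, htn] at hcoeff
    have hfin : (coeff μ (pderiv 0 q)) • f + c • deriv f = 0 := by
      rw [Algebra.smul_def, Algebra.smul_def]
      exact hcoeff
    exact hc (li_pair f hli _ c hfin).2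

lemma main_lemma (f : SF) (hli : LinearIndependent ℝ ![f, deriv f]) :
    ∀ n (q : MvPolynomial ℕ ℝ), q.vars ⊆ Finset.range n →
      Ebar f (constLift q) = 0 → ∃ r, q = MvPolynomial.C r := by
  intro n
  induction n with
  | zero => intro q hv _; exact ⟨coeff 0 q, eq_C_of_vars_subset_empty q hv⟩
  | succ n ih =>
    suffices key : ∀ D (q : MvPolynomial ℕ ℝ), q.totalDegree ≤ D →
        q.vars ⊆ Finset.range (n+1) → Ebar f (constLift q) = 0 →
        ∃ r, q = MvPolynomial.C r by
      intro q hv hker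
      exact key q.totalDegree q le_rfl hv hker
    intro D
    induction D with
    | zero =>
      intro q hD hv hker
      have hp : pderiv n q = 0 := by
        by_contra hp
        have := totalDegree_pderiv_lt q n hp
        omega
      have hv' : q.vars ⊆ Finset.range n := by
        intro j hj
        have h1 := hv hj
        have h2 := not_mem_vars_of_pderiv_eq_zero n q hp
        simp only [Finset.mem_range] at h1 ⊢
        have : j ≠ n := fun h => h2 (h ▸ hj)
        omega
      exact ih q hv' hker
    | succ D ihD =>
      intro q hD hv hker
      by_cases hp : pderiv n q = 0
      · have hv' : q.vars ⊆ Finset.range n := by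
          intro j hj
          have h1 := hv hj
          have h2 := not_mem_vars_of_pderiv_eq_zero n q hp
          simp only [Finset.mem_range] at h1 ⊢
          have : j ≠ n := fun h => h2 (h ▸ hj)
          omega
        exact ih q hv' hker
      · have hker' := Ebar_pderiv_top f n q hv hker
        have hv' := (vars_pderiv n q).trans hv
        have hD' : (pderiv n q).totalDegree ≤ D := by
          have := totalDegree_pderiv_lt q n hp
          omega
        obtain ⟨c, hcq⟩ := ihD (pderiv n q) hD' hv' hker'
        have hc0 : c ≠ 0 := by
          rintro rfl
          rw [map_zero] at hcq
          exact hp hcq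
        exact (endgame f hli n q hv hker c hc0 hcq).elim


/-- Lemma 7.9: if f and f' are linearly independent, the kernel of
E = f·∂/∂u₀ + Σ_{j≥1} T^j·∂/∂u_j restricted to polynomials in u₀, ..., u_k with
real-constant coefficients consists only of the constants. -/
theorem stmt13 (f : SF) (hf : ContDiff ℝ (⊤ : ℕ∞) f)
    (hli : LinearIndependent ℝ ![f, deriv f]) (k : ℕ)
    (q : MvPolynomial ℕ ℝ) (hvars : q.vars ⊆ Finset.range (k + 1))
    (hker : Ebar f (constLift q) = 0) :
    ∃ r : ℝ, q = MvPolynomial.C r :=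
  main_lemma f hli (k+1) q hvars hker
end
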